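/- For all integers n ≥ 1 and 0 ≤ k ≤ n−1, the ℓ¹-norm of H_{n,k} with respect to the standard basis satisfies √(n/2) ≤ ∑_{j=0}^∞ |H_{n,k}(j)| ≤ √n. -/
import Mathlib


open scoped BigOperators ENNReal

/-- The Hartley vector `H_{n,k} ∈ ℓ²(ℕ, ℝ)` supported on the `n`-th block
`{n(n-1)/2, …, n(n-1)/2 + n - 1}`, with
`H_{n,k}(n(n-1)/2 + l) = (1/√n)(cos(2πkl/n) + sin(2πkl/n))`. -/
noncomputable def Hvec (n k : ℕ) : lp (fun _ : ℕ => ℝ) 2 :=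
  ∑ l ∈ Finset.range n, lp.single 2 (n * (n - 1) / 2 + l)
    ((1 / Real.sqrt n) *
      (Real.cos (2 * Real.pi * k * l / n) + Real.sin (2 * Real.pi * k * l / n)))

/-- The eigenvalue `λ_{n,k} = (1/n³)(1 + k/nᵖ)`. -/
noncomputable def lam (p : ℝ) (n k : ℕ) : ℝ := (1 / (n : ℝ) ^ 3) * (1 + (k : ℝ) / (n : ℝ) ^ p)

/-- The rank-one operator `v ⊗ v : f ↦ ⟨f, v⟩ v` on a real Hilbert space. -/
noncomputable def rankOneR {H : Type*} [NormedAddCommGroup H] [InnerProductSpace ℝ H]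
    (v : H) : H →L[ℝ] H := (innerSL ℝ v).smulRight v

/-- Sum of sines at rational multiples of `2π` vanishes. -/
lemma sum_sin_eq_zero (n m : ℕ) :
    ∑ l ∈ Finset.range n, Real.sin (2 * Real.pi * m * l / n) = 0 := by
  rcases Nat.eq_zero_or_pos n with rfl | hn
  · simp
  set θ : ℝ := 2 * Real.pi * m / n with hθ
  have hterm : ∀ l : ℕ, (2 * Real.pi * m * l / n : ℝ) = l * θ := by
    intro l; rw [hθ]; ring
  set z : ℂ := Complex.exp (θ * Complex.I) with hz
  have hpow : ∀ l : ℕ, z ^ l = Complex.exp ((l * θ : ℝ) * Complex.I) := by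
    intro l
    rw [hz, ← Complex.exp_nat_mul]
    push_cast
    ring_nf
  have him : ∀ l : ℕ, Real.sin (2 * Real.pi * m * l / n) = (z ^ l).im := by
    intro l
    rw [hpow, Complex.exp_ofReal_mul_I_im, hterm]
  have hsum : (∑ l ∈ Finset.range n, z ^ l).im =
      ∑ l ∈ Finset.range n, Real.sin (2 * Real.pi * m * l / n) := by
    rw [Complex.im_sum]
    exact Finset.sum_congr rfl fun l _ => (him l).symm
  rw [← hsum]
  have hzn : z ^ n = 1 := by
    rw [hpow]
    have : ((n : ℝ) * θ : ℝ) * Complex.I = (m : ℤ) * (2 * Real.pi * Complex.I) := by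
      rw [hθ]
      have hn' : (n : ℂ) ≠ 0 := Nat.cast_ne_zero.mpr hn.ne'
      push_cast
      field_simp
    rw [this, Complex.exp_int_mul_two_pi_mul_I]
  by_cases h1 : z = 1
  · simp [h1]
  · rw [geom_sum_eq h1, hzn]
    simp

private lemma sum_sq_eq (n k : ℕ) (hn : 1 ≤ n) :
    ∑ l ∈ Finset.range n,
      (Real.cos (2 * Real.pi * k * l / n) + Real.sin (2 * Real.pi * k * l / n)) ^ 2
      = n := by
  have key : ∀ l : ℕ,
      (Real.cos (2 * Real.pi * k * l / n) + Real.sin (2 * Real.pi * k * l / n)) ^ 2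
      = 1 + Real.sin (2 * Real.pi * ((2 * k : ℕ) : ℝ) * l / n) := by
    intro l
    have h2 : (2 * Real.pi * ((2 * k : ℕ) : ℝ) * l / n : ℝ)
        = 2 * (2 * Real.pi * k * l / n) := by
      push_cast; ring
    rw [h2, Real.sin_two_mul]
    have := Real.sin_sq_add_cos_sq (2 * Real.pi * k * l / n)
    linear_combination this
  rw [Finset.sum_congr rfl fun l _ => key l, Finset.sum_add_distrib,
    sum_sin_eq_zero n (2 * k)]
  simp

theorem Hvec_l1_norm_bounds (n k : ℕ) (hn : 1 ≤ n) (hk : k ≤ n - 1) :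
    Real.sqrt (n / 2) ≤ ∑' j : ℕ, ‖Hvec n k j‖ ∧
      ∑' j : ℕ, ‖Hvec n k j‖ ≤ Real.sqrt n := by
  classical
  set m := n * (n - 1) / 2 with hm
  set a : ℕ → ℝ := fun l =>
    Real.cos (2 * Real.pi * k * l / n) + Real.sin (2 * Real.pi * k * l / n) with ha
  have hnpos : (0 : ℝ) < n := by exact_mod_cast hn
  have hsqrtn : (0 : ℝ) < Real.sqrt n := Real.sqrt_pos.mpr hnpos
  -- evaluation of Hvec
  have happ : ∀ j : ℕ, Hvec n k j =
      ∑ l ∈ Finset.range n, if m + l = j then (1 / Real.sqrt n) * a l else 0 := by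
    intro j
    rw [Hvec, lp.coeFn_sum]
    rw [Finset.sum_apply]
    refine Finset.sum_congr rfl fun l _ => ?_
    by_cases h : j = m + l
    · subst h
      rw [lp.single_apply_self, if_pos rfl]
    · rw [lp.single_apply_ne _ _ _ h, if_neg (fun h' => h h'.symm)]
  have happ_in : ∀ l < n, Hvec n k (m + l) = (1 / Real.sqrt n) * a l := by
    intro l hl
    rw [happ]
    rw [Finset.sum_eq_single l]
    · simp
    · intro b hb hbl
      rw [if_neg]
      omega
    · intro h; exact absurd (Finset.mem_range.mpr hl) h
  have happ_out : ∀ j : ℕ, j ∉ (Finset.range n).image (fun l => m + l) →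
      Hvec n k j = 0 := by
    intro j hj
    rw [happ]
    refine Finset.sum_eq_zero fun l hl => ?_
    rw [if_neg]
    intro h
    exact hj (Finset.mem_image.mpr ⟨l, hl, h⟩)
  -- tsum reduces to a finite sum
  have htsum : ∑' j : ℕ, ‖Hvec n k j‖ =
      (1 / Real.sqrt n) * ∑ l ∈ Finset.range n, |a l| := by
    rw [tsum_eq_sum (s := (Finset.range n).image (fun l => m + l))
      (fun j hj => by rw [happ_out j hj, norm_zero])]
    rw [Finset.sum_image (fun x _ y _ h => by omega)]
    rw [Finset.mul_sum]
    refine Finset.sum_congr rfl fun l hl => ?_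
    rw [happ_in l (Finset.mem_range.mp hl), Real.norm_eq_abs, abs_mul,
      abs_of_pos (by positivity)]
  have hsq : ∑ l ∈ Finset.range n, (a l) ^ 2 = n := sum_sq_eq n k hn
  set A := ∑ l ∈ Finset.range n, |a l| with hA
  have hAnn : 0 ≤ A := Finset.sum_nonneg fun l _ => abs_nonneg _
  -- upper bound : A ≤ n
  have hupper : A ≤ n := by
    have := Finset.sum_mul_sq_le_sq_mul_sq (Finset.range n) (fun l => |a l|) (fun _ => 1)
    simp only [mul_one, one_pow, Finset.sum_const, Finset.card_range, nsmul_eq_mul] at this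
    have h2 : ∑ l ∈ Finset.range n, |a l| ^ 2 = n := by
      rw [← hsq]; exact Finset.sum_congr rfl fun l _ => sq_abs _
    rw [h2] at this
    nlinarith
  -- lower bound : n ≤ √2 * A
  have hlower : (n : ℝ) ≤ Real.sqrt 2 * A := by
    have hbd : ∀ l ∈ Finset.range n, |a l| ^ 2 ≤ Real.sqrt 2 * |a l| := by
      intro l _
      have habs : |a l| ≤ Real.sqrt 2 := by
        have hsq2 : a l ^ 2 ≤ 2 := by
          have h1 := Real.sin_sq_add_cos_sq (2 * Real.pi * k * l / n)
          have h2 : Real.sin (2 * Real.pi * k * l / n) *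
              Real.cos (2 * Real.pi * k * l / n) ≤ 1/2 := by
            nlinarith [sq_nonneg (Real.sin (2 * Real.pi * k * l / n) -
              Real.cos (2 * Real.pi * k * l / n))]
          simp only [ha]
          nlinarith
        have h3 : (0:ℝ) ≤ 2 := by norm_num
        have := Real.sqrt_le_sqrt hsq2
        rwa [Real.sqrt_sq_eq_abs] at this
      calc |a l| ^ 2 = |a l| * |a l| := sq (|a l|)
        _ ≤ Real.sqrt 2 * |a l| := mul_le_mul_of_nonneg_right habs (abs_nonneg _)
    calc (n : ℝ) = ∑ l ∈ Finset.range n, |a l| ^ 2 := by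
          rw [← hsq]; exact (Finset.sum_congr rfl fun l _ => (sq_abs _).symm)
      _ ≤ ∑ l ∈ Finset.range n, Real.sqrt 2 * |a l| := Finset.sum_le_sum hbd
      _ = Real.sqrt 2 * A := by rw [← Finset.mul_sum]
  rw [htsum]
  have hrw : (1 / Real.sqrt n) * A = A / Real.sqrt n := by ring
  rw [hrw]
  have hmul : Real.sqrt n * Real.sqrt n = n := Real.mul_self_sqrt hnpos.le
  constructor
  · have h2pos : (0:ℝ) < Real.sqrt 2 := by positivity
    have h1 : Real.sqrt ((n : ℝ) / 2) = Real.sqrt n / Real.sqrt 2 :=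
      Real.sqrt_div hnpos.le 2
    rw [h1, div_le_div_iff₀ h2pos hsqrtn, hmul]
    linarith [hlower]
  · rw [div_le_iff₀ hsqrtn, hmul]
    exact hupper
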